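/- For every prime p ≥ 5, ss_p^{(2*)}(X)² = (X − 256)^ν · Σ_{n=0}^{(p−1+6ε)/4} C(2n,n)²·C(4n,2n)·X^{(p−1+6ε)/4 − n} as polynomials in 𝔽_p[X] (the binomial coefficients being reduced mod p). -/
import Mathlib


open Polynomial

noncomputable section

/-- The class number h(√-d) of the imaginary quadratic field ℚ(√-d),
realized as the subfield of ℂ generated by i·√d. -/
def classNumberSqrtNeg (d : ℕ) : ℕ :=
  haveI : FiniteDimensional ℚ (IntermediateField.adjoin ℚ {(Complex.I * Real.sqrt d : ℂ)}) :=
    IntermediateField.adjoin.finiteDimensional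
      ⟨X ^ 2 + C (d : ℚ), monic_X_pow_add_C _ (by norm_num), by
        have h : (Complex.I * (Real.sqrt d : ℂ)) ^ 2 = -(d : ℂ) := by
          rw [mul_pow, Complex.I_sq, ← Complex.ofReal_pow, Real.sq_sqrt (Nat.cast_nonneg d)]
          simp
        simp [h]⟩
  haveI : NumberField (IntermediateField.adjoin ℚ {(Complex.I * Real.sqrt d : ℂ)}) := ⟨⟩
  NumberField.classNumber (IntermediateField.adjoin ℚ {(Complex.I * Real.sqrt d : ℂ)})

variable (p : ℕ) [Fact p.Prime]

/-- ε = (1 - (-1|p))/2 -/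
def eps : ℕ := ((1 - legendreSym p (-1)) / 2).toNat
/-- δ = (1 - (-3|p))/2 -/
def del : ℕ := ((1 - legendreSym p (-3)) / 2).toNat
/-- ν = (1 - (-2|p))/2 -/
def nu : ℕ := ((1 - legendreSym p (-2)) / 2).toNat

/-- The Pochhammer symbol (x)_n = x(x+1)⋯(x+n-1) in 𝔽_p. -/
def poch (x : ZMod p) (n : ℕ) : ZMod p := (ascPochhammer (ZMod p) n).eval x

/-- The level-2 Fricke supersingular polynomial ss_p^{(2*)}(X) ∈ 𝔽_p[X]:
(X-256)^ν · Σ_{n=0}^{m₂} ((-m₂)_n (β₂)_n / (n!)²) 256^n X^{m₂+ε-n},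
with m₂ = ⌊p/8⌋ and β₂ = 3/8 - (ε-2ν)/4. -/
def ss2Star : (ZMod p)[X] :=
  (X - C 256) ^ nu p *
    ∑ n ∈ Finset.range (p / 8 + 1),
      C (poch p (-(p / 8 : ℕ) : ZMod p) n *
         poch p ((3 : ZMod p) / 8 - ((((eps p : ℤ) - 2 * (nu p : ℤ)) : ℤ) : ZMod p) / 4) n /
         ((n.factorial : ZMod p)) ^ 2 * 256 ^ n) *
      X ^ (p / 8 + eps p - n)

/-- L^{(2*)}(p): the number of distinct roots of ss_p^{(2*)}(X) in 𝔽_p. -/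
def L2Star : ℕ := (ss2Star p).roots.toFinset.card

namespace SS2X

variable {K : Type*} [Field K]

lemma coeff_sum_CXpow (g : ℕ → K) (M n : ℕ) (hg : ∀ k, M < k → g k = 0) :
    (∑ i ∈ Finset.range (M+1), C (g i) * X ^ i).coeff n = g n := by
  rw [Polynomial.finset_sum_coeff]
  simp only [Polynomial.coeff_C_mul, Polynomial.coeff_X_pow, mul_ite, mul_one, mul_zero]
  rw [Finset.sum_ite_eq]
  by_cases h : n ∈ Finset.range (M+1)
  · simp [h]
  · simp only [h, if_false]
    exact (hg n (by simp only [Finset.mem_range] at h; omega)).symm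

lemma coeff_sum_CXpow' (g : ℕ → K) (M n : ℕ) :
    (∑ i ∈ Finset.range (M+1), C (g i) * X ^ i).coeff n
      = if n ∈ Finset.range (M+1) then g n else 0 := by
  rw [Polynomial.finset_sum_coeff]
  simp only [Polynomial.coeff_C_mul, Polynomial.coeff_X_pow, mul_ite, mul_one, mul_zero]
  rw [Finset.sum_ite_eq]

lemma natDeg_sum_le (g : ℕ → K) (M : ℕ) :
    (∑ i ∈ Finset.range (M+1), C (g i) * X ^ i).natDegree ≤ M := by
  apply Polynomial.natDegree_sum_le_of_forall_le
  intro i hi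
  refine le_trans (Polynomial.natDegree_C_mul_le _ _) ?_
  simp only [Finset.mem_range] at hi
  rw [Polynomial.natDegree_X_pow]
  omega

lemma eq_sum_of_rec (N : ℕ) (W : K[X]) (c : ℕ → K)
    (hdeg : W.natDegree ≤ N)
    (h0 : W.coeff 0 = c 0)
    (hrecW : ∀ k : ℕ, ((k:K)+1)^3 * W.coeff (k+1)
        = 4*(4*(k:K)+1)*(4*(k:K)+2)*(4*(k:K)+3) * W.coeff k)
    (hcrec : ∀ k : ℕ, k < N → ((k:K)+1)^3 * c (k+1)
        = 4*(4*(k:K)+1)*(4*(k:K)+2)*(4*(k:K)+3) * c k)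
    (hinv : ∀ k : ℕ, k < N → ((k:K)+1) ≠ 0) :
    W = ∑ i ∈ Finset.range (N+1), C (c i) * X ^ i := by
  have key : ∀ k, k ≤ N → W.coeff k = c k := by
    intro k
    induction k with
    | zero => exact fun _ => h0
    | succ k ih =>
      intro hk
      have hkN : k < N := by omega
      have h3 : ((k:K)+1)^3 ≠ 0 := pow_ne_zero _ (hinv k hkN)
      apply mul_left_cancel₀ h3
      rw [hrecW k, hcrec k hkN, ih (by omega)]
  apply Polynomial.ext
  intro n
  rw [coeff_sum_CXpow']
  by_cases h : n ∈ Finset.range (N+1)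
  · rw [if_pos h]
    exact key n (by simp only [Finset.mem_range] at h; omega)
  · rw [if_neg h]
    apply Polynomial.coeff_eq_zero_of_natDegree_lt
    simp only [Finset.mem_range] at h
    omega

theorem core (m N v : ℕ) (a b : K) (f c : ℕ → K)
    (hrec : ∀ k : ℕ, ((k:K)+1)^2 * f (k+1) = 256*((k:K)+a)*((k:K)+b) * f k)
    (hf0 : f 0 = 1)
    (hfz : ∀ k, m < k → f k = 0)
    (hc0 : c 0 = 1)
    (hcrec : ∀ k : ℕ, k < N → ((k:K)+1)^3 * c (k+1)
        = 4*(4*(k:K)+1)*(4*(k:K)+2)*(4*(k:K)+3) * c k)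
    (hinv : ∀ k : ℕ, k < N → ((k:K)+1) ≠ 0)
    (hsum : (256:K)*(a+b+1) = 384+256*(v:ℕ))
    (hprod : (256:K)*(a*b) = 12+128*(v:ℕ))
    (hv : v = 0 ∨ v = 1)
    (hdeg : v + 2*m ≤ N) :
    (1 - C (256:K) * X)^v * (∑ i ∈ Finset.range (m+1), C (f i) * X^i)^2
      = ∑ i ∈ Finset.range (N+1), C (c i) * X^i := by
  set F : K[X] := ∑ i ∈ Finset.range (m+1), C (f i) * X^i with hFe
  have hFc : ∀ n, F.coeff n = f n := fun n => coeff_sum_CXpow f m n hfz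
  set F1 : K[X] := derivative F with hF1e
  set F2 : K[X] := derivative F1 with hF2e
  set F3 : K[X] := derivative F2 with hF3e
  have hF1c : ∀ n : ℕ, F1.coeff n = f (n+1) * ((n:K)+1) := by
    intro n; rw [hF1e, Polynomial.coeff_derivative, hFc]; try push_cast; try ring
  have hF2c : ∀ n : ℕ, F2.coeff n = f (n+2) * (((n:K)+2) * ((n:K)+1)) := by
    intro n; rw [hF2e, Polynomial.coeff_derivative, hF1c]; try push_cast; try ring
  have hF3c : ∀ n : ℕ, F3.coeff n = f (n+3) * (((n:K)+3) * ((n:K)+2) * ((n:K)+1)) := by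
    intro n; rw [hF3e, Polynomial.coeff_derivative, hF2c]; try push_cast; try ring
  have hFdeg : F.natDegree ≤ m := natDeg_sum_le f m
  set s4 : K := 384 + 256*(v:ℕ) with hs4e
  set q4 : K := 12 + 128*(v:ℕ) with hq4e
  -- the hypergeometric ODE for F
  have hL : X^1 * F2 - C (256:K) * (X^2 * F2) + F1 - C s4 * (X^1*F1) - C q4 * F = 0 := by
    apply Polynomial.ext
    intro n
    simp only [Polynomial.coeff_sub, Polynomial.coeff_add, Polynomial.coeff_C_mul,
      Polynomial.coeff_zero, Polynomial.coeff_X_pow_mul']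
    rcases n with _ | n
    · norm_num [hF1c, hFc]
      have h := hrec 0
      push_cast at h ⊢
      linear_combination h + f 0 * hprod
    rcases n with _ | n
    · norm_num [hF1c, hF2c, hFc]
      have h := hrec 1
      push_cast at h ⊢
      linear_combination h + f 1 * hsum + f 1 * hprod
    · simp only [show (1:ℕ) ≤ n+1+1 from by omega, show (2:ℕ) ≤ n+1+1 from by omega,
        if_true, show n+1+1-1 = n+1 from by omega, show n+1+1-2 = n from by omega,
        hF1c, hF2c, hFc]
      have h := hrec (n+2)
      push_cast at h ⊢
      linear_combination h + (f (n+2) * ((n:K)+2)) * hsum + f (n+2) * hprod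
  have hdF : derivative F = F1 := hF1e.symm
  have hdF1 : derivative F1 = F2 := hF2e.symm
  have hdF2 : derivative F2 = F3 := hF3e.symm
  -- common tail, applied per branch
  have tail : ∀ W : K[X], W.natDegree ≤ N → W.coeff 0 = 1 →
      (∀ k : ℕ, ((k:K)+1)^3 * W.coeff (k+1)
        = 4*(4*(k:K)+1)*(4*(k:K)+2)*(4*(k:K)+3) * W.coeff k) →
      W = ∑ i ∈ Finset.range (N+1), C (c i) * X^i := by
    intro W h1 h2 h3
    exact eq_sum_of_rec N W c h1 (by rw [h2, hc0]) h3 hcrec hinv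
  rcases hv with rfl | rfl
  · -- ν = 0
    rw [pow_zero, one_mul, pow_two]
    set W : K[X] := F * F with hWe
    set W1 : K[X] := derivative W with hW1e
    set W2 : K[X] := derivative W1 with hW2e
    set W3 : K[X] := derivative W2 with hW3e
    have w1 : W1 = 2*(F*F1) := by
      rw [hW1e, hWe]; simp only [derivative_mul, hdF]; ring
    have w2 : W2 = 2*(F1*F1) + 2*(F*F2) := by
      rw [hW2e, w1]
      simp only [derivative_mul, derivative_ofNat, hdF, hdF1]; ring
    have w3 : W3 = 6*(F1*F2) + 2*(F*F3) := by
      rw [hW3e, w2]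
      simp only [derivative_add, derivative_mul, derivative_ofNat, hdF, hdF1, hdF2]; ring
    have hs4 : s4 = 384 := by rw [hs4e]; norm_num
    have hq4 : q4 = 12 := by rw [hq4e]; norm_num
    have hLn : X^1 * F2 - 256*(X^2*F2) + F1 - 384*(X^1*F1) - 12*F = 0 := by
      have h := hL
      rw [hs4, hq4] at h
      simpa only [map_ofNat] using h
    have hL' := congrArg derivative hLn
    rw [derivative_zero] at hL'
    simp only [derivative_sub, derivative_add, derivative_mul, derivative_ofNat,
      derivative_X_pow, derivative_X, derivative_zero, hdF, hdF1, hdF2, Nat.cast_ofNat, map_natCast, map_ofNat,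
      Nat.cast_one, map_one, pow_zero, pow_one, zero_mul, mul_zero, zero_add, add_zero,
      one_mul] at hL'
    have hE : X^2 * W3 - C (256:K) * (X^3 * W3) + C (3:K) * (X^1 * W2)
        - C (1152:K) * (X^2*W2) + W1 - C (816:K) * (X^1*W1) - C (24:K) * W = 0 := by
      rw [w1, w2, w3, hWe]
      simp only [map_ofNat]
      linear_combination (2*F + 6*(X:K[X])*F1) * hLn + (2*X*F) * hL'
    have hW1c : ∀ n : ℕ, W1.coeff n = W.coeff (n+1) * ((n:K)+1) := by
      intro n; rw [hW1e, Polynomial.coeff_derivative]; try push_cast; try ring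
    have hW2c : ∀ n : ℕ, W2.coeff n = W.coeff (n+2) * (((n:K)+2) * ((n:K)+1)) := by
      intro n; rw [hW2e, Polynomial.coeff_derivative, hW1c]; try push_cast; try ring
    have hW3c : ∀ n : ℕ, W3.coeff n = W.coeff (n+3) * (((n:K)+3) * ((n:K)+2) * ((n:K)+1)) := by
      intro n; rw [hW3e, Polynomial.coeff_derivative, hW2c]; try push_cast; try ring
    have hrecW : ∀ k : ℕ, ((k:K)+1)^3 * W.coeff (k+1)
        = 4*(4*(k:K)+1)*(4*(k:K)+2)*(4*(k:K)+3) * W.coeff k := by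
      intro k
      have h := congrArg (fun q : K[X] => q.coeff k) hE
      simp only [Polynomial.coeff_sub, Polynomial.coeff_add, Polynomial.coeff_C_mul,
        Polynomial.coeff_zero, Polynomial.coeff_X_pow_mul'] at h
      rcases k with _ | _ | _ | n
      · norm_num [hW1c] at h
        push_cast
        linear_combination h
      · norm_num [hW1c, hW2c] at h
        push_cast
        linear_combination h
      · norm_num [hW1c, hW2c, hW3c, show (2:ℕ)+1 = 3 from rfl] at h
        push_cast at h ⊢
        linear_combination h
      · simp only [show (1:ℕ) ≤ n+1+1+1 from by omega, show (2:ℕ) ≤ n+1+1+1 from by omega,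
          show (3:ℕ) ≤ n+1+1+1 from by omega, if_true,
          show n+1+1+1-1 = n+2 from by omega, show n+1+1+1-2 = n+1 from by omega,
          show n+1+1+1-3 = n from by omega,
          hW1c, hW2c, hW3c,
          show n+1+3 = n+1+1+1+1 from by omega, show n+2+2 = n+1+1+1+1 from by omega,
          show n+3 = n+1+1+1 from by omega, show n+2+1 = n+1+1+1 from by omega] at h
        push_cast at h ⊢
        linear_combination h
    apply tail W ?_ ?_ hrecW
    · rw [hWe]
      refine le_trans Polynomial.natDegree_mul_le ?_
      omega
    · rw [hWe, Polynomial.mul_coeff_zero, hFc, hf0]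
      norm_num
  · -- ν = 1
    rw [pow_one, pow_two]
    set W : K[X] := (1 - C (256:K) * X) * (F * F) with hWe
    set W1 : K[X] := derivative W with hW1e
    set W2 : K[X] := derivative W1 with hW2e
    set W3 : K[X] := derivative W2 with hW3e
    have w1 : W1 = -256*(F*F) + (1-256*X)*(2*(F*F1)) := by
      rw [hW1e, hWe]
      simp only [derivative_mul, derivative_sub, derivative_one, derivative_X, derivative_C,
        map_ofNat, derivative_ofNat, hdF]
      ring
    have w2 : W2 = -1024*(F*F1) + (1-256*X)*(2*(F1*F1) + 2*(F*F2)) := by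
      rw [hW2e, w1]
      simp only [derivative_add, derivative_mul, derivative_sub, derivative_one, derivative_X,
        derivative_neg, derivative_ofNat, hdF, hdF1]
      ring
    have w3 : W3 = -1536*(F1*F1 + F*F2) + (1-256*X)*(6*(F1*F2) + 2*(F*F3)) := by
      rw [hW3e, w2]
      simp only [derivative_add, derivative_mul, derivative_sub, derivative_one, derivative_X,
        derivative_neg, derivative_ofNat, hdF, hdF1, hdF2]
      ring
    have hs4 : s4 = 640 := by rw [hs4e]; norm_num
    have hq4 : q4 = 140 := by rw [hq4e]; norm_num
    have hLn : X^1 * F2 - 256*(X^2*F2) + F1 - 640*(X^1*F1) - 140*F = 0 := by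
      have h := hL
      rw [hs4, hq4] at h
      simpa only [map_ofNat] using h
    have hL' := congrArg derivative hLn
    rw [derivative_zero] at hL'
    simp only [derivative_sub, derivative_add, derivative_mul, derivative_ofNat,
      derivative_X_pow, derivative_X, derivative_zero, hdF, hdF1, hdF2, Nat.cast_ofNat, map_natCast, map_ofNat,
      Nat.cast_one, map_one, pow_zero, pow_one, zero_mul, mul_zero, zero_add, add_zero,
      one_mul] at hL'
    have hE : X^2 * W3 - C (256:K) * (X^3 * W3) + C (3:K) * (X^1 * W2)
        - C (1152:K) * (X^2*W2) + W1 - C (816:K) * (X^1*W1) - C (24:K) * W = 0 := by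
      rw [w1, w2, w3, hWe]
      simp only [map_ofNat]
      linear_combination ((2-1536*(X:K[X]))*F) * hLn + ((6*X-1536*X^2)*F1) * hLn
        + ((2*X-512*X^2)*F) * hL'
    have hW1c : ∀ n : ℕ, W1.coeff n = W.coeff (n+1) * ((n:K)+1) := by
      intro n; rw [hW1e, Polynomial.coeff_derivative]; try push_cast; try ring
    have hW2c : ∀ n : ℕ, W2.coeff n = W.coeff (n+2) * (((n:K)+2) * ((n:K)+1)) := by
      intro n; rw [hW2e, Polynomial.coeff_derivative, hW1c]; try push_cast; try ring
    have hW3c : ∀ n : ℕ, W3.coeff n = W.coeff (n+3) * (((n:K)+3) * ((n:K)+2) * ((n:K)+1)) := by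
      intro n; rw [hW3e, Polynomial.coeff_derivative, hW2c]; try push_cast; try ring
    have hrecW : ∀ k : ℕ, ((k:K)+1)^3 * W.coeff (k+1)
        = 4*(4*(k:K)+1)*(4*(k:K)+2)*(4*(k:K)+3) * W.coeff k := by
      intro k
      have h := congrArg (fun q : K[X] => q.coeff k) hE
      simp only [Polynomial.coeff_sub, Polynomial.coeff_add, Polynomial.coeff_C_mul,
        Polynomial.coeff_zero, Polynomial.coeff_X_pow_mul'] at h
      rcases k with _ | _ | _ | n
      · norm_num [hW1c] at h
        push_cast
        linear_combination h
      · norm_num [hW1c, hW2c] at h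
        push_cast
        linear_combination h
      · norm_num [hW1c, hW2c, hW3c, show (2:ℕ)+1 = 3 from rfl] at h
        push_cast at h ⊢
        linear_combination h
      · simp only [show (1:ℕ) ≤ n+1+1+1 from by omega, show (2:ℕ) ≤ n+1+1+1 from by omega,
          show (3:ℕ) ≤ n+1+1+1 from by omega, if_true,
          show n+1+1+1-1 = n+2 from by omega, show n+1+1+1-2 = n+1 from by omega,
          show n+1+1+1-3 = n from by omega,
          hW1c, hW2c, hW3c,
          show n+1+3 = n+1+1+1+1 from by omega, show n+2+2 = n+1+1+1+1 from by omega,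
          show n+3 = n+1+1+1 from by omega, show n+2+1 = n+1+1+1 from by omega] at h
        push_cast at h ⊢
        linear_combination h
    apply tail W ?_ ?_ hrecW
    · rw [hWe]
      refine le_trans Polynomial.natDegree_mul_le ?_
      have h1 : (1 - C (256:K) * X).natDegree ≤ 1 := by
        refine le_trans (Polynomial.natDegree_sub_le _ _) (max_le (by simp)
          (le_trans (Polynomial.natDegree_C_mul_le _ _) Polynomial.natDegree_X_le))
      have h2 : (F*F).natDegree ≤ 2*m := by
        refine le_trans Polynomial.natDegree_mul_le ?_
        omega
      omega
    · rw [hWe, Polynomial.mul_coeff_zero, Polynomial.mul_coeff_zero, hFc, hf0]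
      simp


-- Pochhammer basics
lemma poch_zero (x : ZMod p) : poch p x 0 = 1 := by simp [poch]

lemma poch_succ (x : ZMod p) (n : ℕ) : poch p x (n+1) = poch p x n * (x + n) := by
  unfold poch
  rw [ascPochhammer_succ_right, eval_mul]
  simp

lemma poch_add (x : ZMod p) (n j : ℕ) : poch p x (n+j) = poch p x n * poch p (x + n) j := by
  unfold poch
  rw [← ascPochhammer_mul, eval_mul, eval_comp]
  simp

lemma poch_neg_trunc (m k : ℕ) (h : m < k) : poch p (-(m:ZMod p)) k = 0 := by
  rw [show k = (m+1) + (k-(m+1)) from by omega, poch_add, poch_succ]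
  simp

-- cast non-vanishing
lemma cast_fact_ne (n : ℕ) (h : n < p) : ((n.factorial : ℕ) : ZMod p) ≠ 0 := by
  rw [Ne, ZMod.natCast_eq_zero_iff]
  intro hdvd
  have := (Nat.Prime.dvd_factorial (Fact.out)).mp hdvd
  omega

lemma cast_succ_ne (k : ℕ) (h : k + 1 < p) : ((k:ZMod p)+1) ≠ 0 := by
  have : (((k+1:ℕ)) : ZMod p) ≠ 0 := by
    rw [Ne, ZMod.natCast_eq_zero_iff]
    intro hdvd
    have := Nat.le_of_dvd (by omega) hdvd
    omega
  push_cast at this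
  exact this

-- the f sequence facts
lemma f_rec (m : ℕ) (hm : m < p) (b : ZMod p) (k : ℕ) :
    ((k:ZMod p)+1)^2 * (poch p (-(m:ZMod p)) (k+1) * poch p b (k+1)
        / (((k+1).factorial : ZMod p))^2 * 256^(k+1))
      = 256*((k:ZMod p)+(-(m:ZMod p)))*((k:ZMod p)+b)
        * (poch p (-(m:ZMod p)) k * poch p b k / ((k.factorial : ZMod p))^2 * 256^k) := by
  by_cases hk : k < m
  · have h1 : ((k.factorial : ℕ) : ZMod p) ≠ 0 := cast_fact_ne p k (by omega)
    have h2 : ((k:ZMod p)+1) ≠ 0 := cast_succ_ne p k (by omega)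
    rw [poch_succ, poch_succ]
    have e3 : (((k+1).factorial : ℕ) : ZMod p) = ((k:ZMod p)+1) * ((k.factorial : ℕ) : ZMod p) := by
      rw [Nat.factorial_succ]; push_cast; ring
    rw [e3]
    field_simp
    ring
  · by_cases hk2 : k = m
    · subst hk2
      rw [poch_neg_trunc p k (k+1) (by omega)]
      simp only [zero_mul, zero_div, mul_zero]
      ring
    · rw [poch_neg_trunc p m (k+1) (by omega), poch_neg_trunc p m k (by omega)]
      simp only [zero_mul, zero_div, mul_zero]

-- binomial facts
lemma choose_fact_nat (k : ℕ) :
    (4*k).factorial = ((2*k).choose k)^2 * ((4*k).choose (2*k)) * (k.factorial)^4 := by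
  have h1 := Nat.choose_mul_factorial_mul_factorial (show k ≤ 2*k by omega)
  have h2 := Nat.choose_mul_factorial_mul_factorial (show 2*k ≤ 4*k by omega)
  rw [show 2*k - k = k from by omega] at h1
  rw [show 4*k - 2*k = 2*k from by omega] at h2
  rw [← h2, ← h1]
  ring

lemma c_rec (N : ℕ) (hN : N < p) (k : ℕ) (hk : k < N) :
    ((k:ZMod p)+1)^3 * ((((2*(k+1)).choose (k+1) : ℕ) : ZMod p)^2
        * (((4*(k+1)).choose (2*(k+1)) : ℕ) : ZMod p))
      = 4*(4*(k:ZMod p)+1)*(4*(k:ZMod p)+2)*(4*(k:ZMod p)+3)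
        * ((((2*k).choose k : ℕ) : ZMod p)^2 * (((4*k).choose (2*k) : ℕ) : ZMod p)) := by
  have kf : ((k.factorial : ℕ) : ZMod p) ≠ 0 := cast_fact_ne p k (by omega)
  have kf1 : (((k+1).factorial : ℕ) : ZMod p) ≠ 0 := cast_fact_ne p (k+1) (by omega)
  have key : ∀ j : ℕ, (((4*j).factorial : ℕ) : ZMod p)
      = ((((2*j).choose j : ℕ) : ZMod p)^2 * (((4*j).choose (2*j) : ℕ) : ZMod p))
        * ((j.factorial : ℕ) : ZMod p)^4 := by
    intro j
    have := choose_fact_nat j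
    exact_mod_cast congrArg (fun t : ℕ => ((t : ℕ) : ZMod p)) this
  have hfac : (((4*k+4).factorial : ℕ) : ZMod p)
      = (4*(k:ZMod p)+4)*(4*(k:ZMod p)+3)*(4*(k:ZMod p)+2)*(4*(k:ZMod p)+1)
        * (((4*k).factorial : ℕ) : ZMod p) := by
    have : (4*k+4).factorial = (4*k+4)*((4*k+3)*((4*k+2)*((4*k+1)*(4*k).factorial))) := by
      rw [show 4*k+4 = (4*k+3)+1 from rfl, Nat.factorial_succ,
        show 4*k+3 = (4*k+2)+1 from rfl, Nat.factorial_succ,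
        show 4*k+2 = (4*k+1)+1 from rfl, Nat.factorial_succ,
        show 4*k+1 = (4*k)+1 from rfl, Nat.factorial_succ]
    rw [this]
    push_cast
    ring
  have e4 : (((k+1).factorial : ℕ) : ZMod p) = ((k:ZMod p)+1) * ((k.factorial : ℕ) : ZMod p) := by
    rw [Nat.factorial_succ]; push_cast; ring
  have k1 := key (k+1)
  rw [show 2*(k+1) = 2*k+2 from by omega, show 4*(k+1) = 4*k+4 from by omega] at k1 ⊢
  rw [hfac, key k, e4] at k1
  have h2 : ((k:ZMod p)+1) ≠ 0 := cast_succ_ne p k (by omega)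
  -- cancel
  apply mul_left_cancel₀ (pow_ne_zero 4 (mul_ne_zero h2 kf))
  rw [mul_pow] at k1 ⊢
  linear_combination (-((k:ZMod p)+1)^3) * k1

lemma reflect_finset_sum {R : Type*} [Semiring R] (N : ℕ) (s : Finset ℕ) (g : ℕ → R[X]) :
    Polynomial.reflect N (∑ i ∈ s, g i) = ∑ i ∈ s, Polynomial.reflect N (g i) := by
  classical
  induction s using Finset.cons_induction with
  | empty => simp
  | cons a s ha ih => rw [Finset.sum_cons, Finset.sum_cons, Polynomial.reflect_add, ih]

theorem aux (m e v N : ℕ) (β : ZMod p)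
    (hm : m < p) (hN : N < p) (hv : v = 0 ∨ v = 1) (hN2 : N = 2*(m+e)+v)
    (hb0 : poch p β 0 = 1)
    (hsum : (256:ZMod p)*(-(m:ZMod p)+β+1) = 384+256*(v:ℕ))
    (hprod : (256:ZMod p)*(-(m:ZMod p)*β) = 12+128*(v:ℕ)) :
    ((X - C (256:ZMod p))^v *
      ∑ n ∈ Finset.range (m+1),
        C (poch p (-(m:ZMod p)) n * poch p β n / ((n.factorial : ZMod p))^2 * 256^n)
          * X^(m+e-n))^2
    = (X - C (256:ZMod p))^v *
      ∑ n ∈ Finset.range (N+1),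
        C ((((2*n).choose n : ℕ) : ZMod p)^2 * (((4*n).choose (2*n) : ℕ) : ZMod p))
          * X^(N-n) := by
  let K := ZMod p
  let f : ℕ → K := fun n => poch p (-(m:ZMod p)) n * poch p β n
      / ((n.factorial : ZMod p))^2 * 256^n
  let c : ℕ → K := fun n =>
      (((2*n).choose n : ℕ) : ZMod p)^2 * (((4*n).choose (2*n) : ℕ) : ZMod p)
  show ((X - C (256:K))^v * ∑ n ∈ Finset.range (m+1), C (f n) * X^(m+e-n))^2
    = (X - C (256:K))^v * ∑ n ∈ Finset.range (N+1), C (c n) * X^(N-n)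
  have hf0 : f 0 = 1 := by
    show poch p (-(m:ZMod p)) 0 * poch p β 0 / ((Nat.factorial 0 : ℕ) : ZMod p)^2 * 256^0 = 1
    rw [poch_zero, hb0]
    norm_num
  have hfz : ∀ k, m < k → f k = 0 := by
    intro k hk
    show poch p (-(m:ZMod p)) k * poch p β k / ((k.factorial : ℕ) : ZMod p)^2 * 256^k = 0
    rw [poch_neg_trunc p m k hk]
    simp
  have hrec : ∀ k : ℕ, ((k:K)+1)^2 * f (k+1)
      = 256*((k:K)+(-(m:ZMod p)))*((k:K)+β) * f k := fun k => f_rec p m hm β k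
  have hc0 : c 0 = 1 := by show ((Nat.choose 0 0 : ℕ) : ZMod p)^2 * ((Nat.choose 0 0 : ℕ) : ZMod p) = 1; simp
  have hcrec : ∀ k : ℕ, k < N → ((k:K)+1)^3 * c (k+1)
      = 4*(4*(k:K)+1)*(4*(k:K)+2)*(4*(k:K)+3) * c k := fun k hk => c_rec p N hN k hk
  have hinv : ∀ k : ℕ, k < N → ((k:K)+1) ≠ 0 := fun k hk => cast_succ_ne p k (by omega)
  have hcore := core m N v (-(m:ZMod p)) β f c hrec hf0 hfz hc0 hcrec hinv hsum hprod hv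
    (by omega)
  -- reflection
  set Fhat : K[X] := ∑ i ∈ Finset.range (m+1), C (f i) * X^i with hFhate
  set Ghat : K[X] := ∑ i ∈ Finset.range (N+1), C (c i) * X^i with hGhate
  have hFdeg : Fhat.natDegree ≤ m := natDeg_sum_le f m
  have hGdeg : Ghat.natDegree ≤ N := natDeg_sum_le c N
  have hBdeg1 : (1 - C (256:K)*X).natDegree ≤ 1 := by
    refine le_trans (Polynomial.natDegree_sub_le _ _) (max_le (by simp)
      (le_trans (Polynomial.natDegree_C_mul_le _ _) Polynomial.natDegree_X_le))
  have hBdeg : ((1 - C (256:K)*X)^v).natDegree ≤ v := by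
    refine le_trans Polynomial.natDegree_pow_le ?_
    have := hBdeg1
    nlinarith
  have hXv : Polynomial.reflect v ((1 - C (256:K)*X)^v) = (X - C (256:K))^v := by
    rcases hv with rfl | rfl
    · rw [pow_zero, pow_zero, ← Polynomial.C_1, Polynomial.reflect_C, pow_zero, mul_one]
    · rw [pow_one, pow_one, Polynomial.reflect_sub]
      have e1 : Polynomial.reflect 1 (1 : K[X]) = X := by
        rw [← Polynomial.C_1, Polynomial.reflect_C, pow_one, Polynomial.C_1, one_mul]
      have e2 : Polynomial.reflect 1 (C (256:K) * X) = C (256:K) := by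
        rw [show (X : K[X]) = X^1 from (pow_one X).symm, Polynomial.reflect_C_mul_X_pow]
        rw [Polynomial.revAt_le (le_refl 1)]
        norm_num
      rw [e1, e2]
  have hS : Polynomial.reflect (m+e) Fhat
      = ∑ n ∈ Finset.range (m+1), C (f n) * X^(m+e-n) := by
    rw [hFhate, reflect_finset_sum]
    refine Finset.sum_congr rfl ?_
    intro n hn
    simp only [Finset.mem_range] at hn
    rw [Polynomial.reflect_C_mul_X_pow, Polynomial.revAt_le (by omega : n ≤ m+e)]
  have hT : Polynomial.reflect N Ghat
      = ∑ n ∈ Finset.range (N+1), C (c n) * X^(N-n) := by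
    rw [hGhate, reflect_finset_sum]
    refine Finset.sum_congr rfl ?_
    intro n hn
    simp only [Finset.mem_range] at hn
    rw [Polynomial.reflect_C_mul_X_pow, Polynomial.revAt_le (by omega : n ≤ N)]
  have hQdeg : ((1 - C (256:K)*X)^v * Fhat).natDegree ≤ v + (m+e) := by
    refine le_trans Polynomial.natDegree_mul_le ?_
    omega
  have hGQdeg : ((1 - C (256:K)*X)^v * Ghat).natDegree ≤ v + N := by
    refine le_trans Polynomial.natDegree_mul_le ?_
    omega
  rw [← hS, ← hT, ← hXv,
    ← Polynomial.reflect_mul _ _ hBdeg (le_trans hFdeg (Nat.le_add_right m e)),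
    ← Polynomial.reflect_mul _ _ hBdeg hGdeg,
    pow_two, ← Polynomial.reflect_mul _ _ hQdeg hQdeg,
    show (v+(m+e)) + (v+(m+e)) = v + N from by omega]
  congr 1
  rw [← hcore]
  ring


end SS2X

open SS2X in

/-- For every prime p ≥ 5, ss_p^{(2*)}(X)² = (X − 256)^ν ·
Σ_{n=0}^{(p−1+6ε)/4} C(2n,n)²·C(4n,2n)·X^{(p−1+6ε)/4 − n} in 𝔽_p[X]. -/
theorem ss2star_sq_explicit (hp : 5 ≤ p) :
    (ss2Star p) ^ 2 =
      (X - C 256) ^ nu p *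
        ∑ n ∈ Finset.range ((p - 1 + 6 * eps p) / 4 + 1),
          C ((((2 * n).choose n : ℕ) : ZMod p) ^ 2 * (((4 * n).choose (2 * n) : ℕ) : ZMod p)) *
            X ^ ((p - 1 + 6 * eps p) / 4 - n) := by
  have pp : p.Prime := Fact.out
  have hp2 : p ≠ 2 := by omega
  have hodd : p % 2 = 1 := Nat.odd_iff.mp (pp.odd_of_ne_two hp2)
  have h82 : p % 8 % 2 = p % 2 := Nat.mod_mod_of_dvd p (by norm_num)
  have h84 : p % 8 % 4 = p % 4 := Nat.mod_mod_of_dvd p (by norm_num)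
  have hpm : p = 8 * (p / 8) + p % 8 := by omega
  have hr : p % 8 = 1 ∨ p % 8 = 3 ∨ p % 8 = 5 ∨ p % 8 = 7 := by omega
  -- basic nonvanishing
  have h1z : (1 : ZMod p) ≠ 0 := one_ne_zero
  have h2z : (2 : ZMod p) ≠ 0 := by
    have : ((2:ℕ) : ZMod p) ≠ 0 := by
      rw [Ne, ZMod.natCast_eq_zero_iff]
      intro h
      have := Nat.le_of_dvd (by norm_num) h
      omega
    exact_mod_cast this
  have h4z : (4 : ZMod p) ≠ 0 := by
    have : (4 : ZMod p) = 2^2 := by norm_num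
    rw [this]
    exact pow_ne_zero _ h2z
  have h8z : (8 : ZMod p) ≠ 0 := by
    have : (8 : ZMod p) = 2^3 := by norm_num
    rw [this]
    exact pow_ne_zero _ h2z
  -- epsilon
  have hm1ne : ((-1 : ℤ) : ZMod p) ≠ 0 := by push_cast; exact neg_ne_zero.mpr h1z
  have hm2ne : ((-2 : ℤ) : ZMod p) ≠ 0 := by push_cast; exact neg_ne_zero.mpr h2z
  have heps : eps p = if p % 4 = 3 then 1 else 0 := by
    by_cases h : p % 4 = 3
    · have hns : ¬ IsSquare (-1 : ZMod p) := by
        rw [ZMod.exists_sq_eq_neg_one_iff]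
        simp [h]
      have : legendreSym p (-1) = -1 := by
        rw [legendreSym.eq_neg_one_iff]
        push_cast
        exact hns
      rw [eps, this, if_pos h]
      decide
    · have hs : IsSquare (-1 : ZMod p) := ZMod.exists_sq_eq_neg_one_iff.mpr h
      have : legendreSym p (-1) = 1 := by
        rw [legendreSym.eq_one_iff p hm1ne]
        push_cast
        exact hs
      rw [eps, this, if_neg h]
      decide
  have hnu : nu p = if p % 8 = 5 ∨ p % 8 = 7 then 1 else 0 := by
    by_cases h : p % 8 = 5 ∨ p % 8 = 7
    · have hns : ¬ IsSquare (-2 : ZMod p) := by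
        rw [ZMod.exists_sq_eq_neg_two_iff hp2]
        omega
      have : legendreSym p (-2) = -1 := by
        rw [legendreSym.eq_neg_one_iff]
        push_cast
        exact hns
      rw [nu, this, if_pos h]
      decide
    · have hs : IsSquare (-2 : ZMod p) := by
        rw [ZMod.exists_sq_eq_neg_two_iff hp2]
        omega
      have : legendreSym p (-2) = 1 := by
        rw [legendreSym.eq_one_iff p hm2ne]
        push_cast
        exact hs
      rw [nu, this, if_neg h]
      decide
  have ha8 : (8 : ZMod p) * (-((p/8 : ℕ) : ZMod p)) = ((p % 8 : ℕ) : ZMod p) := by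
    have h0 : ((8*(p/8) + p%8 : ℕ) : ZMod p) = 0 := by
      rw [← hpm]; exact ZMod.natCast_self p
    push_cast at h0
    linear_combination -h0
  have he1 : eps p ≤ 1 := by rw [heps]; split <;> norm_num
  have hss : ss2Star p = (X - C 256) ^ nu p *
    ∑ n ∈ Finset.range (p / 8 + 1),
      C (poch p (-(p / 8 : ℕ) : ZMod p) n *
         poch p ((3 : ZMod p) / 8 - ((((eps p : ℤ) - 2 * (nu p : ℤ)) : ℤ) : ZMod p) / 4) n /
         ((n.factorial : ZMod p)) ^ 2 * 256 ^ n) *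
      X ^ (p / 8 + eps p - n) := rfl
  rw [hss]
  have hgen : ∀ z : ZMod p, (8:ZMod p) * ((3:ZMod p)/8 - z/4) = 3 - 2*z := by
    intro z
    field_simp
    ring
  set β : ZMod p := (3 : ZMod p) / 8 - ((((eps p : ℤ) - 2 * (nu p : ℤ)) : ℤ) : ZMod p) / 4 with hβe
  have hb0 : poch p β 0 = 1 := by simp [poch]
  refine aux p (p/8) (eps p) (nu p) ((p-1+6*eps p)/4) β (by omega) (by omega) ?_ ?_ hb0 ?_ ?_
  · rw [hnu]; split_ifs <;> simp
  · -- N = 2*(m+e)+v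
    rcases hr with h8 | h8 | h8 | h8
    · have he : eps p = 0 := by rw [heps, if_neg (by omega)]
      have hv : nu p = 0 := by rw [hnu, if_neg (by omega)]
      rw [he, hv]; omega
    · have he : eps p = 1 := by rw [heps, if_pos (by omega)]
      have hv : nu p = 0 := by rw [hnu, if_neg (by omega)]
      rw [he, hv]; omega
    · have he : eps p = 0 := by rw [heps, if_neg (by omega)]
      have hv : nu p = 1 := by rw [hnu, if_pos (by omega)]
      rw [he, hv]; omega
    · have he : eps p = 1 := by rw [heps, if_pos (by omega)]
      have hv : nu p = 1 := by rw [hnu, if_pos (by omega)]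
      rw [he, hv]; omega
  · -- hsum
    rcases hr with h8 | h8 | h8 | h8
    · have he : eps p = 0 := by rw [heps, if_neg (by omega)]
      have hv : nu p = 0 := by rw [hnu, if_neg (by omega)]
      have hcast : ((((eps p : ℤ) - 2 * (nu p : ℤ)) : ℤ) : ZMod p) = 0 := by
        rw [he, hv]; push_cast; norm_num
      have hb8 : (8 : ZMod p) * β = 3 := by
        rw [hβe, hgen, hcast]; norm_num
      rw [h8] at ha8
      rw [hv]
      push_cast at ha8 ⊢
      linear_combination 32*ha8 + 32*hb8
    · have he : eps p = 1 := by rw [heps, if_pos (by omega)]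
      have hv : nu p = 0 := by rw [hnu, if_neg (by omega)]
      have hcast : ((((eps p : ℤ) - 2 * (nu p : ℤ)) : ℤ) : ZMod p) = 1 := by
        rw [he, hv]; push_cast; norm_num
      have hb8 : (8 : ZMod p) * β = 1 := by
        rw [hβe, hgen, hcast]; norm_num
      rw [h8] at ha8
      rw [hv]
      push_cast at ha8 ⊢
      linear_combination 32*ha8 + 32*hb8
    · have he : eps p = 0 := by rw [heps, if_neg (by omega)]
      have hv : nu p = 1 := by rw [hnu, if_pos (by omega)]
      have hcast : ((((eps p : ℤ) - 2 * (nu p : ℤ)) : ℤ) : ZMod p) = -2 := by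
        rw [he, hv]; push_cast; norm_num
      have hb8 : (8 : ZMod p) * β = 7 := by
        rw [hβe, hgen, hcast]; norm_num
      rw [h8] at ha8
      rw [hv]
      push_cast at ha8 ⊢
      linear_combination 32*ha8 + 32*hb8
    · have he : eps p = 1 := by rw [heps, if_pos (by omega)]
      have hv : nu p = 1 := by rw [hnu, if_pos (by omega)]
      have hcast : ((((eps p : ℤ) - 2 * (nu p : ℤ)) : ℤ) : ZMod p) = -1 := by
        rw [he, hv]; push_cast; norm_num
      have hb8 : (8 : ZMod p) * β = 5 := by
        rw [hβe, hgen, hcast]; norm_num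
      rw [h8] at ha8
      rw [hv]
      push_cast at ha8 ⊢
      linear_combination 32*ha8 + 32*hb8
  · -- hprod
    rcases hr with h8 | h8 | h8 | h8
    · have he : eps p = 0 := by rw [heps, if_neg (by omega)]
      have hv : nu p = 0 := by rw [hnu, if_neg (by omega)]
      have hcast : ((((eps p : ℤ) - 2 * (nu p : ℤ)) : ℤ) : ZMod p) = 0 := by
        rw [he, hv]; push_cast; norm_num
      have hb8 : (8 : ZMod p) * β = 3 := by
        rw [hβe, hgen, hcast]; norm_num
      rw [h8] at ha8
      rw [hv]
      push_cast at ha8 ⊢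
      linear_combination (4*(8*β))*ha8 + 4*hb8
    · have he : eps p = 1 := by rw [heps, if_pos (by omega)]
      have hv : nu p = 0 := by rw [hnu, if_neg (by omega)]
      have hcast : ((((eps p : ℤ) - 2 * (nu p : ℤ)) : ℤ) : ZMod p) = 1 := by
        rw [he, hv]; push_cast; norm_num
      have hb8 : (8 : ZMod p) * β = 1 := by
        rw [hβe, hgen, hcast]; norm_num
      rw [h8] at ha8
      rw [hv]
      push_cast at ha8 ⊢
      linear_combination (4*(8*β))*ha8 + 12*hb8
    · have he : eps p = 0 := by rw [heps, if_neg (by omega)]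
      have hv : nu p = 1 := by rw [hnu, if_pos (by omega)]
      have hcast : ((((eps p : ℤ) - 2 * (nu p : ℤ)) : ℤ) : ZMod p) = -2 := by
        rw [he, hv]; push_cast; norm_num
      have hb8 : (8 : ZMod p) * β = 7 := by
        rw [hβe, hgen, hcast]; norm_num
      rw [h8] at ha8
      rw [hv]
      push_cast at ha8 ⊢
      linear_combination (4*(8*β))*ha8 + 20*hb8
    · have he : eps p = 1 := by rw [heps, if_pos (by omega)]
      have hv : nu p = 1 := by rw [hnu, if_pos (by omega)]
      have hcast : ((((eps p : ℤ) - 2 * (nu p : ℤ)) : ℤ) : ZMod p) = -1 := by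
        rw [he, hv]; push_cast; norm_num
      have hb8 : (8 : ZMod p) * β = 5 := by
        rw [hβe, hgen, hcast]; norm_num
      rw [h8] at ha8
      rw [hv]
      push_cast at ha8 ⊢
      linear_combination (4*(8*β))*ha8 + 28*hb8
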